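/- arXiv:2003.08022 — 10 statements merged into one kernel-verified Lean document; each statement's English description precedes it below -/
import Mathlib

section
/- Let k ≥ 1. Suppose t ↦ z(t) = (x(t),u_k(t),…,u_1(t),y(t),p_x(t),p_k(t),…,p_1(t),p_y(t)) is a differentiable curve in ℝ^{2(k+2)} solving Hamilton's equations for H (i.e. the time derivative of each configuration coordinate equals the partial derivative of H with respect to its conjugate momentum, and the time derivative of each momentum equals minus the partial derivative of H with respect to its conjugate coordinate). Then x'(t) = P_1(z(t)), u_k'(t) = P_2(z(t)), and the functions Q_i(t) := P_i(z(t)), i = 1,…,k+2, satisfy Q_1' = Q_3 Q_2, Q_i' = −Q_1 Q_{i+1} for 2 ≤ i ≤ k+1, and Q_{k+2}' = 0. -/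
/-!
Along a solution of Hamilton's equations every differentiable observable `F` evolves by
`dF/dt = {F, H}`, and for `H = (P₁² + P₂²)/2` the Leibniz rule gives
`{F, H} = P₁ {F, P₁} + P₂ {F, P₂}`. For `F = P₁` the first term vanishes by antisymmetry, and
`{P₁, P₂} = ∂P₁/∂u₁ = P₃`. Every other `Pᵢ` is a single momentum `p`, whose equation of motion is
`ṗ = -∂H/∂q = -P₁ ∂P₁/∂q`, and `∂P₁/∂q` is the next power function (zero for `q = y`).
The equations for `x` and `u_k` are Hamilton's, as `∂P₁/∂p_x = 1` and `P₁` does not involve `p_k`.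
-/

noncomputable def powerFn (k : ℕ) (a : Fin (k + 2))
    (z : (Fin (k + 2) → ℝ) × (Fin (k + 2) → ℝ)) : ℝ :=
  if a = ⟨0, by omega⟩ then
    z.2 ⟨0, by omega⟩ + ∑ j : Fin k, z.1 ⟨j.1 + 1, by omega⟩ * z.2 ⟨j.1 + 2, by omega⟩
  else z.2 a

noncomputable def jetHam (k : ℕ) (z : (Fin (k + 2) → ℝ) × (Fin (k + 2) → ℝ)) : ℝ :=
  (1 / 2) * (powerFn k ⟨0, by omega⟩ z ^ 2 + powerFn k ⟨1, by omega⟩ z ^ 2)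

open Finset

abbrev PhaseSpace (ι : Type*) := (ι → ℝ) × (ι → ℝ)

namespace PhaseSpace

variable {ι : Type*}

def position (i : ι) : PhaseSpace ι →L[ℝ] ℝ :=
  (ContinuousLinearMap.proj i).comp (ContinuousLinearMap.fst ℝ _ _)

def momentum (i : ι) : PhaseSpace ι →L[ℝ] ℝ :=
  (ContinuousLinearMap.proj i).comp (ContinuousLinearMap.snd ℝ _ _)

@[simp] lemma position_apply (i : ι) (v : PhaseSpace ι) : position i v = v.1 i := rfl

@[simp] lemma momentum_apply (i : ι) (v : PhaseSpace ι) : momentum i v = v.2 i := rfl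

variable [Fintype ι] [DecidableEq ι]

def poissonBracket (L M : PhaseSpace ι →L[ℝ] ℝ) : ℝ :=
  ∑ i, (L (Pi.single i 1, 0) * M (0, Pi.single i 1) - L (0, Pi.single i 1) * M (Pi.single i 1, 0))

lemma poissonBracket_self (L : PhaseSpace ι →L[ℝ] ℝ) : poissonBracket L L = 0 :=
  sum_eq_zero fun i _ => by ring

lemma poissonBracket_smul_add_smul (L M N : PhaseSpace ι →L[ℝ] ℝ) (a b : ℝ) :
    poissonBracket L (a • M + b • N) = a * poissonBracket L M + b * poissonBracket L N := by
  simp only [poissonBracket, mul_sum, ← sum_add_distrib]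
  refine sum_congr rfl fun i _ => ?_
  simp only [add_apply, smul_apply, smul_eq_mul]
  ring

lemma poissonBracket_momentum (L : PhaseSpace ι →L[ℝ] ℝ) (a : ι) :
    poissonBracket L (momentum a) = L (Pi.single a 1, 0) := by
  simp [poissonBracket, Pi.single_apply]

lemma apply_eq_sum_partials (L : PhaseSpace ι →L[ℝ] ℝ) (v : PhaseSpace ι) :
    L v = ∑ i, (v.1 i * L (Pi.single i 1, 0) + v.2 i * L (0, Pi.single i 1)) := by
  have hv : v = ∑ i, (v.1 i • (Pi.single i 1, 0) + v.2 i • (0, Pi.single i 1)) := by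
    ext j <;> simp [Prod.fst_sum, Prod.snd_sum, Pi.single_apply]
  conv_lhs => rw [hv]
  simp only [map_sum, map_add, map_smul, smul_eq_mul]

theorem hasDerivAt_comp_eq_poissonBracket {H F : PhaseSpace ι → ℝ}
    {z : ℝ → PhaseSpace ι} {t : ℝ} (hF : DifferentiableAt ℝ F (z t))
    (hq : ∀ i, HasDerivAt (fun s => (z s).1 i) (fderiv ℝ H (z t) (0, Pi.single i 1)) t)
    (hp : ∀ i, HasDerivAt (fun s => (z s).2 i) (-fderiv ℝ H (z t) (Pi.single i 1, 0)) t) :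
    HasDerivAt (fun s => F (z s)) (poissonBracket (fderiv ℝ F (z t)) (fderiv ℝ H (z t))) t := by
  have hz := (hasDerivAt_pi.2 hq).prodMk (hasDerivAt_pi.2 hp)
  refine (hF.hasFDerivAt.comp_hasDerivAt t hz).congr_deriv ?_
  rw [apply_eq_sum_partials, poissonBracket]
  exact sum_congr rfl fun i _ => by ring

end PhaseSpace

lemma fderiv_half_mul_sq_add_sq {E : Type*} [NormedAddCommGroup E] [NormedSpace ℝ E]
    {f g : E → ℝ} {w : E} (hf : DifferentiableAt ℝ f w) (hg : DifferentiableAt ℝ g w) :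
    fderiv ℝ (fun v => 1 / 2 * (f v ^ 2 + g v ^ 2)) w =
      f w • fderiv ℝ f w + g w • fderiv ℝ g w := by
  refine (((hf.hasFDerivAt.pow 2).add (hg.hasFDerivAt.pow 2)).const_mul (1 / 2)).fderiv.trans ?_
  ext v
  simp only [one_div, Nat.add_one_sub_one, pow_one, nsmul_eq_mul, Nat.cast_ofNat, smul_add,
    add_apply, smul_apply, smul_eq_mul]
  ring

open PhaseSpace

namespace JetSpace

variable {k : ℕ}

lemma powerFn_of_ne_zero {a : Fin (k + 2)} (ha : a ≠ ⟨0, by omega⟩) :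
    powerFn k a = fun w => w.2 a :=
  funext fun _ => if_neg ha

lemma fderiv_powerFn_of_ne_zero {a : Fin (k + 2)} (ha : a ≠ ⟨0, by omega⟩)
    (w : PhaseSpace (Fin (k + 2))) :
    fderiv ℝ (powerFn k a) w = momentum a := by
  rw [powerFn_of_ne_zero ha]
  exact (momentum a).fderiv

lemma hasFDerivAt_powerFn_zero (w : PhaseSpace (Fin (k + 2))) :
    HasFDerivAt (powerFn k ⟨0, by omega⟩)
      (momentum ⟨0, by omega⟩ + ∑ j : Fin k,
        (w.1 ⟨j.1 + 1, by omega⟩ • momentum ⟨j.1 + 2, by omega⟩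
          + w.2 ⟨j.1 + 2, by omega⟩ • position ⟨j.1 + 1, by omega⟩)) w := by
  have hP : powerFn k ⟨0, by omega⟩ = fun v => momentum ⟨0, by omega⟩ v + ∑ j : Fin k,
      position ⟨j.1 + 1, by omega⟩ v * momentum ⟨j.1 + 2, by omega⟩ v :=
    funext fun _ => if_pos rfl
  rw [hP]
  exact (momentum _).hasFDerivAt.add
    (HasFDerivAt.fun_sum fun j _ => (position _).hasFDerivAt.mul (momentum _).hasFDerivAt)

lemma differentiableAt_powerFn (a : Fin (k + 2)) (w : PhaseSpace (Fin (k + 2))) :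
    DifferentiableAt ℝ (powerFn k a) w := by
  by_cases ha : a = ⟨0, by omega⟩
  · subst ha
    exact (hasFDerivAt_powerFn_zero w).differentiableAt
  · rw [powerFn_of_ne_zero ha]
    exact (momentum a).differentiableAt

lemma fderiv_jetHam (w : PhaseSpace (Fin (k + 2))) :
    fderiv ℝ (jetHam k) w =
      powerFn k ⟨0, by omega⟩ w • fderiv ℝ (powerFn k ⟨0, by omega⟩) w
        + powerFn k ⟨1, by omega⟩ w • fderiv ℝ (powerFn k ⟨1, by omega⟩) w :=
  fderiv_half_mul_sq_add_sq (differentiableAt_powerFn _ w) (differentiableAt_powerFn _ w)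

lemma fderiv_powerFn_zero_snd_single_zero (w : PhaseSpace (Fin (k + 2))) :
    fderiv ℝ (powerFn k ⟨0, by omega⟩) w (0, Pi.single ⟨0, by omega⟩ 1) = 1 := by
  rw [(hasFDerivAt_powerFn_zero w).fderiv]
  simp [Fin.ext_iff]

lemma fderiv_powerFn_zero_snd_single_one (w : PhaseSpace (Fin (k + 2))) :
    fderiv ℝ (powerFn k ⟨0, by omega⟩) w (0, Pi.single ⟨1, by omega⟩ 1) = 0 := by
  rw [(hasFDerivAt_powerFn_zero w).fderiv]
  simp [Fin.ext_iff]

lemma fderiv_powerFn_zero_fst_single (w : PhaseSpace (Fin (k + 2))) (i : ℕ) (h1 : 1 ≤ i)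
    (hi : i ≤ k) :
    fderiv ℝ (powerFn k ⟨0, by omega⟩) w (Pi.single ⟨i, by omega⟩ 1, 0) =
      w.2 ⟨i + 1, by omega⟩ := by
  rw [(hasFDerivAt_powerFn_zero w).fderiv]
  simp only [Fin.zero_eta, add_apply, momentum_apply, Pi.zero_apply, _root_.sum_apply, smul_apply,
    smul_eq_mul, mul_zero, position_apply, Pi.single_apply, Fin.ext_iff, mul_ite, mul_one, zero_add]
  rw [sum_eq_single ⟨i - 1, by omega⟩
    (fun j _ hj => if_neg (by simp [Fin.ext_iff] at hj; omega)) (by simp), if_pos (by simp; omega)]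
  exact congrArg w.2 (Fin.ext (by simp; omega))

lemma fderiv_powerFn_zero_fst_single_last (w : PhaseSpace (Fin (k + 2))) :
    fderiv ℝ (powerFn k ⟨0, by omega⟩) w (Pi.single ⟨k + 1, Nat.lt_add_one _⟩ 1, 0) = 0 := by
  rw [(hasFDerivAt_powerFn_zero w).fderiv]
  simp only [Fin.zero_eta, add_apply, momentum_apply, Pi.zero_apply, _root_.sum_apply, smul_apply,
    smul_eq_mul, mul_zero, position_apply, Pi.single_apply, Fin.ext_iff, Nat.add_right_cancel_iff,
    mul_ite, mul_one, zero_add]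
  exact sum_eq_zero fun j _ => if_neg j.2.ne

lemma fderiv_jetHam_apply (w v : PhaseSpace (Fin (k + 2))) :
    fderiv ℝ (jetHam k) w v =
      powerFn k ⟨0, by omega⟩ w * fderiv ℝ (powerFn k ⟨0, by omega⟩) w v
        + powerFn k ⟨1, by omega⟩ w * v.2 ⟨1, by omega⟩ := by
  rw [fderiv_jetHam, fderiv_powerFn_of_ne_zero (a := ⟨1, by omega⟩) (by simp)]
  rfl

end JetSpace

open PhaseSpace JetSpace

/-- along any solution of Hamilton's equations for `H`,
`x' = P_1`, `u_k' = P_2`, and the functions `Q_i = P_i ∘ z` satisfy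
`Q_1' = Q_3 Q_2`, `Q_i' = -Q_1 Q_{i+1}` for `2 ≤ i ≤ k+1`, and `Q_{k+2}' = 0`. -/
theorem stmt_0 (k : ℕ) (hk : 1 ≤ k)
    (z : ℝ → (Fin (k + 2) → ℝ) × (Fin (k + 2) → ℝ))
    (hq : ∀ (t : ℝ) (i : Fin (k + 2)),
      HasDerivAt (fun s => (z s).1 i)
        (fderiv ℝ (jetHam k) (z t) ((0 : Fin (k + 2) → ℝ), (Pi.single i 1 : Fin (k + 2) → ℝ))) t)
    (hp : ∀ (t : ℝ) (i : Fin (k + 2)),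
      HasDerivAt (fun s => (z s).2 i)
        (-(fderiv ℝ (jetHam k) (z t) ((Pi.single i 1 : Fin (k + 2) → ℝ), (0 : Fin (k + 2) → ℝ)))) t) :
    (∀ t : ℝ, HasDerivAt (fun s => (z s).1 ⟨0, by omega⟩)
      (powerFn k ⟨0, by omega⟩ (z t)) t) ∧
    (∀ t : ℝ, HasDerivAt (fun s => (z s).1 ⟨1, by omega⟩)
      (powerFn k ⟨1, by omega⟩ (z t)) t) ∧
    (∀ t : ℝ, HasDerivAt (fun s => powerFn k ⟨0, by omega⟩ (z s))
      (powerFn k ⟨2, by omega⟩ (z t) * powerFn k ⟨1, by omega⟩ (z t)) t) ∧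
    (∀ (i : ℕ) (_h2 : 2 ≤ i) (_hik : i ≤ k + 1) (t : ℝ),
      HasDerivAt (fun s => powerFn k ⟨i - 1, by omega⟩ (z s))
        (-(powerFn k ⟨0, by omega⟩ (z t) * powerFn k ⟨i, by omega⟩ (z t))) t) ∧
    (∀ t : ℝ, HasDerivAt (fun s => powerFn k ⟨k + 1, by omega⟩ (z s)) 0 t) := by
  refine ⟨fun t => ?_, fun t => ?_, fun t => ?_, fun i h2 hi t => ?_, fun t => ?_⟩
  · have h := hq t ⟨0, by omega⟩
    rw [fderiv_jetHam_apply, fderiv_powerFn_zero_snd_single_zero] at h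
    simpa using h
  · have h := hq t ⟨1, by omega⟩
    rw [fderiv_jetHam_apply, fderiv_powerFn_zero_snd_single_one] at h
    simpa using h
  · have h := hasDerivAt_comp_eq_poissonBracket
      (differentiableAt_powerFn ⟨0, by omega⟩ _) (hq t) (hp t)
    rw [fderiv_jetHam, poissonBracket_smul_add_smul, poissonBracket_self,
      fderiv_powerFn_of_ne_zero (a := ⟨1, by omega⟩) (by simp), poissonBracket_momentum,
      fderiv_powerFn_zero_fst_single _ 1 le_rfl hk] at h
    rw [powerFn_of_ne_zero (a := ⟨2, _⟩) (by simp)]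
    simpa [mul_comm] using h
  · obtain ⟨i, rfl⟩ : ∃ m, i = m + 1 := ⟨i - 1, by omega⟩
    have h := hp t ⟨i, by omega⟩
    rw [fderiv_jetHam_apply, fderiv_powerFn_zero_fst_single _ i (by omega) (by omega)] at h
    rw [powerFn_of_ne_zero (a := ⟨i + 1 - 1, _⟩) (by simp; omega),
      powerFn_of_ne_zero (a := ⟨i + 1, _⟩) (by simp)]
    simpa using h
  · have h := hp t ⟨k + 1, by omega⟩
    rw [fderiv_jetHam_apply, fderiv_powerFn_zero_fst_single_last] at h
    rw [powerFn_of_ne_zero (by simp)]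
    simpa using h
end

section
/- Let k ≥ 2 and let P_1,…,P_{k+2}: ℝ → ℝ be differentiable functions satisfying the reduced geodesic equations. Then for every i = 1,…,k the function s ↦ C_i(P_2(s),…,P_{k+2}(s)) is constant on ℝ. -/
/-!
Differentiate `C_{n+2}` along a solution. Relabel the variables as the chain `Q_j = P_{k-n+j}`,
so that `Q_j' = -P_1 Q_{j+1}` for `j ≤ n + 1` and `Q_{n+2}` is constant. The derivative of the
`j`-th summand of `C_{n+2}` is then `F_j - F_{j+1}` for an explicit flux `F_j` which vanishes at
`j = 0` (it carries the factor `j` from `(Q_{n+1}^j)'`), and the derivative of the last summand is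
`F_{n+1}`. The sum telescopes to `F_0 = 0`.
-/

/-- The reduced geodesic equations for the jet space `J^k` (1-based index `i`):
`P_1' = P_3 P_2`, `P_i' = −P_1 P_{i+1}` for `2 ≤ i ≤ k+1`, and `P_{k+2}' = 0`. -/
def ReducedGeodesic (k : ℕ) (P : ℕ → ℝ → ℝ) : Prop :=
  (∀ s : ℝ, HasDerivAt (P 1) (P 3 s * P 2 s) s) ∧
  (∀ (i : ℕ), 2 ≤ i → i ≤ k + 1 → ∀ s : ℝ, HasDerivAt (P i) (-(P 1 s * P (i + 1) s)) s) ∧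
  (∀ s : ℝ, HasDerivAt (P (k + 2)) 0 s)

/-- The Casimir functions `C_1, …, C_k` of the variables `(P_2, …, P_{k+2})`:
`C_1 = P_{k+2}` and, for `2 ≤ i ≤ k`,
`C_i = P_{k+2}^{i-1} P_{k+2-i} + ∑_{j=1}^{i-2} (−1)^j P_{k+2}^{i-1-j} P_{k+2-i+j} P_{k+1}^j/j!
      + (−1)^{i-1} P_{k+1}^i/((i−2)!·i)`.
Here `P : ℕ → ℝ` records the values of the variables (1-based indexing). -/
noncomputable def casimir (k i : ℕ) (P : ℕ → ℝ) : ℝ :=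
  if i = 1 then P (k + 2)
  else
    P (k + 2) ^ (i - 1) * P (k + 2 - i)
      + ∑ j ∈ Finset.Icc 1 (i - 2),
          (-1 : ℝ) ^ j * P (k + 2) ^ (i - 1 - j) * P (k + 2 - i + j) * P (k + 1) ^ j
            / (Nat.factorial j : ℝ)
      + (-1 : ℝ) ^ (i - 1) * P (k + 1) ^ i / ((Nat.factorial (i - 2) : ℝ) * (i : ℝ))

open Finset Nat

noncomputable def chainCasimir (n : ℕ) (q : ℕ → ℝ) : ℝ :=
  ∑ j ∈ range (n + 1), (-1) ^ j * q (n + 2) ^ (n + 1 - j) * q j * q (n + 1) ^ j / j ! +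
    (-1) ^ (n + 1) * q (n + 1) ^ (n + 2) / (n ! * (n + 2))

noncomputable def chainCasimirFlux (n : ℕ) (a : ℝ) (q : ℕ → ℝ) (j : ℕ) : ℝ :=
  (-1) ^ (j + 1) * a * q (n + 2) ^ (n + 2 - j) * q j * (j * q (n + 1) ^ (j - 1)) / j !

lemma casimir_eq_chainCasimir {k n : ℕ} (hn : n ≤ k) (p : ℕ → ℝ) :
    casimir k (n + 2) p = chainCasimir n (fun j => p (k - n + j)) := by
  have hlast : k - n + (n + 1) = k + 1 := by omega
  have htop : k - n + (n + 2) = k + 2 := by omega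
  rw [casimir, if_neg (by omega), chainCasimir, hlast, htop, range_eq_Ico,
    sum_eq_sum_Ico_succ_bot (by omega : 0 < n + 1), Ico_add_one_right_eq_Icc]
  simp only [show n + 2 - 1 = n + 1 from rfl, show n + 2 - 2 = n from rfl,
    show k + 2 - (n + 2) = k - n by omega, add_zero, pow_zero, one_mul, Nat.sub_zero,
    factorial_zero, cast_one, div_one, mul_one]
  push_cast
  ring

section ChainDerivative

variable {x : ℝ → ℝ} {Q : ℕ → ℝ → ℝ} {n : ℕ} {s : ℝ}

lemma hasDerivAt_chainCasimir_term {j : ℕ} (hj : j ≤ n + 1)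
    (hQj : HasDerivAt (Q j) (-(x s * Q (j + 1) s)) s)
    (hb : HasDerivAt (Q (n + 1)) (-(x s * Q (n + 2) s)) s) (hc : HasDerivAt (Q (n + 2)) 0 s) :
    HasDerivAt (fun t => (-1) ^ j * Q (n + 2) t ^ (n + 1 - j) * Q j t * Q (n + 1) t ^ j / j !)
      (chainCasimirFlux n (x s) (Q · s) j - chainCasimirFlux n (x s) (Q · s) (j + 1)) s := by
  refine ((((hc.pow _).const_mul _).mul hQj).mul (hb.pow j)).div_const _ |>.congr_deriv ?_
  simp only [Pi.pow_apply, Pi.mul_apply]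
  rw [chainCasimirFlux, chainCasimirFlux, show n + 2 - j = n + 1 - j + 1 by omega,
    show n + 2 - (j + 1) = n + 1 - j by omega, Nat.add_sub_cancel, factorial_succ]
  push_cast
  field_simp
  ring

lemma hasDerivAt_chainCasimir_last (hb : HasDerivAt (Q (n + 1)) (-(x s * Q (n + 2) s)) s) :
    HasDerivAt (fun t => (-1) ^ (n + 1) * Q (n + 1) t ^ (n + 2) / (n ! * (n + 2)))
      (chainCasimirFlux n (x s) (Q · s) (n + 1)) s := by
  refine ((hb.pow _).const_mul _).div_const _ |>.congr_deriv ?_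
  rw [chainCasimirFlux, show n + 2 - (n + 1) = 1 by omega, Nat.add_sub_cancel, factorial_succ]
  push_cast
  field_simp
  ring

lemma hasDerivAt_chainCasimir
    (hQ : ∀ j ≤ n + 1, HasDerivAt (Q j) (-(x s * Q (j + 1) s)) s)
    (hc : HasDerivAt (Q (n + 2)) 0 s) :
    HasDerivAt (fun t => chainCasimir n (Q · t)) 0 s := by
  have hb := hQ (n + 1) le_rfl
  have hterms := HasDerivAt.fun_sum fun j (hj : j ∈ range (n + 1)) =>
    hasDerivAt_chainCasimir_term (mem_range.mp hj).le (hQ j (mem_range.mp hj).le) hb hc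
  refine (hterms.add (hasDerivAt_chainCasimir_last hb)).congr_deriv ?_
  rw [sum_range_sub']
  simp [chainCasimirFlux]

end ChainDerivative

theorem hasDerivAt_casimir_of_reducedGeodesic {k : ℕ} {P : ℕ → ℝ → ℝ}
    (hP : ReducedGeodesic k P) {i : ℕ} (hi1 : 1 ≤ i) (hik : i ≤ k) (s : ℝ) :
    HasDerivAt (fun t => casimir k i (P · t)) 0 s := by
  obtain ⟨-, hmid, htop⟩ := hP
  rcases hi1.eq_or_lt with rfl | hi2
  · simpa [casimir] using htop s
  · obtain ⟨n, rfl⟩ : ∃ n, i = n + 2 := ⟨i - 2, by omega⟩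
    simp only [casimir_eq_chainCasimir (show n ≤ k by omega)]
    refine hasDerivAt_chainCasimir (x := P 1) (Q := fun j => P (k - n + j)) (fun j hj => ?_) ?_
    · exact hmid _ (by omega) (by omega) s
    · simpa [show k - n + (n + 2) = k + 2 by omega] using htop s

theorem stmt_2_general (k : ℕ) (P : ℕ → ℝ → ℝ) (hP : ReducedGeodesic k P)
    (i : ℕ) (hi1 : 1 ≤ i) (hik : i ≤ k) (s t : ℝ) :
    casimir k i (fun m => P m s) = casimir k i (fun m => P m t) :=
  have hderiv := hasDerivAt_casimir_of_reducedGeodesic hP hi1 hik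
  is_const_of_deriv_eq_zero (fun u => (hderiv u).differentiableAt) (fun u => (hderiv u).deriv) s t

/-- along any solution of the reduced geodesic equations, each Casimir
function `C_i`, `1 ≤ i ≤ k`, is constant. -/
theorem stmt_2 (k : ℕ) (hk : 2 ≤ k) (P : ℕ → ℝ → ℝ) (hP : ReducedGeodesic k P)
    (i : ℕ) (hi1 : 1 ≤ i) (hik : i ≤ k) (s t : ℝ) :
    casimir k i (fun m => P m s) = casimir k i (fun m => P m t) :=
  stmt_2_general k P hP i hi1 hik s t
end

section
/- Let k ≥ 2. At every point (P_2,…,P_{k+2}) ∈ ℝ^{k+1} with P_{k+2} ≠ 0, the derivative of the map (C_1,…,C_k): ℝ^{k+1} → ℝ^k is surjective; that is, the differentials dC_1,…,dC_k are linearly independent wherever P_{k+2} ≠ 0. -/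
/-- A point `v ∈ ℝ^{k+1}` records the variables `(P_2, …, P_{k+2})`, with `v j = P_{j+2}`;
`extendVars` re-expresses it with the 1-based indexing used by `casimir`. -/
def extendVars (k : ℕ) (v : Fin (k + 1) → ℝ) : ℕ → ℝ :=
  fun m => if h : 2 ≤ m ∧ m ≤ k + 2 then v ⟨m - 2, by omega⟩ else 0

/-- The map `(C_1, …, C_k) : ℝ^{k+1} → ℝ^k`. -/
noncomputable def casimirMap (k : ℕ) (v : Fin (k + 1) → ℝ) : Fin k → ℝ :=
  fun i => casimir k (i.1 + 1) (extendVars k v)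

/-! Differentiate `C_1` along `P_{k+2}` and `C_{j+1}` (`j ≥ 1`) along `P_{k+1-j}`. Since `C_i`
involves only the `P_m` with `m ≥ k + 2 - i`, and is affine in `P_{k+2-i}` with slope
`P_{k+2}^{i-1}` for `i ≥ 2`, these directional derivatives form a lower triangular `k × k`
matrix with diagonal `1, P_{k+2}, …, P_{k+2}^{k-1}`. When `P_{k+2} ≠ 0` it is invertible, and an
invertible pairing between the differentials and `k` vectors gives both surjectivity and linear
independence. -/

open Function

section PairingMatrix

variable {K E ι : Type*} [Field K] [AddCommGroup E] [Module K E] [Fintype ι] [DecidableEq ι]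
  (f : ι → E →ₗ[K] K) (e : ι → E)

theorem LinearMap.surjective_pi_of_isUnit_pairing (h : IsUnit (Matrix.of fun i j => f i (e j))) :
    Surjective (LinearMap.pi f) := by
  refine Surjective.of_comp (g := Fintype.linearCombination K e) ?_
  convert Matrix.mulVec_surjective_iff_isUnit.2 h using 1
  ext c i
  simp [Fintype.linearCombination_apply, Matrix.mulVec, dotProduct, mul_comm]

theorem LinearMap.linearIndependent_of_isUnit_pairing
    (h : IsUnit (Matrix.of fun i j => f i (e j))) : LinearIndependent K f := by
  refine LinearIndependent.of_comp (LinearMap.pi fun j => LinearMap.applyₗ (e j)) ?_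
  exact Matrix.linearIndependent_rows_iff_isUnit.2 h

end PairingMatrix

theorem DifferentiableAt.fderiv_apply_eq_of_affine_on_line {𝕜 E F : Type*}
    [NontriviallyNormedField 𝕜] [NormedAddCommGroup E] [NormedSpace 𝕜 E]
    [NormedAddCommGroup F] [NormedSpace 𝕜 F] {f : E → F} {x v : E} {a : F}
    (hf : DifferentiableAt 𝕜 f x) (h : ∀ t : 𝕜, f (x + t • v) = f x + t • a) :
    fderiv 𝕜 f x v = a := by
  rw [← hf.lineDeriv_eq_fderiv, lineDeriv, funext h]
  simpa using ((hasDerivAt_id (0 : 𝕜)).smul_const a).deriv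

theorem casimir_one (k : ℕ) (P : ℕ → ℝ) : casimir k 1 P = P (k + 2) := by
  simp [casimir]

theorem casimir_congr {k i : ℕ} (hi : 1 ≤ i) {P Q : ℕ → ℝ}
    (h : ∀ m, k + 2 ≤ m + i → P m = Q m) : casimir k i P = casimir k i Q := by
  unfold casimir
  split_ifs
  · exact h _ (by omega)
  · rw [h (k + 2) (by omega), h (k + 2 - i) (by omega), h (k + 1) (by omega)]
    congr 2
    refine Finset.sum_congr rfl fun j hj => ?_
    rw [h (k + 2 - i + j) (by omega)]

theorem casimir_add_smul_single_of_add_lt {k i m : ℕ} (hi : 1 ≤ i) (hm : m + i < k + 2)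
    (P : ℕ → ℝ) (t : ℝ) : casimir k i (P + t • Pi.single m 1) = casimir k i P :=
  casimir_congr hi fun n hn => by simp [show n ≠ m by omega]

theorem casimir_add_smul_single_sub {k i : ℕ} (hi : 2 ≤ i) (P : ℕ → ℝ) (t : ℝ) :
    casimir k i (P + t • Pi.single (k + 2 - i) 1) = casimir k i P + t * P (k + 2) ^ (i - 1) := by
  have hP : ∀ m, m ≠ k + 2 - i → (P + t • Pi.single (k + 2 - i) 1 : ℕ → ℝ) m = P m :=
    fun m hm => by simp [hm]
  unfold casimir
  rw [if_neg (by omega), if_neg (by omega), hP (k + 2) (by omega), hP (k + 1) (by omega),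
    Finset.sum_congr rfl fun j hj => by rw [hP (k + 2 - i + j) (by simp at hj; omega)]]
  simp only [Pi.add_apply, Pi.smul_apply, Pi.single_eq_same, smul_eq_mul]
  ring

theorem extendVars_last (k : ℕ) (v : Fin (k + 1) → ℝ) :
    extendVars k v (k + 2) = v (Fin.last k) := by
  simp [extendVars, Fin.last]

theorem extendVars_add_smul_single (k : ℕ) (v : Fin (k + 1) → ℝ) (p : Fin (k + 1)) (t : ℝ) :
    extendVars k (v + t • Pi.single p 1) = extendVars k v + t • Pi.single (p.1 + 2) 1 := by
  funext m
  by_cases hm : 2 ≤ m ∧ m ≤ k + 2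
  · have : (⟨m - 2, by omega⟩ : Fin (k + 1)) = p ↔ m = p.1 + 2 := by
      rw [Fin.ext_iff, Fin.val_mk]; omega
    simp [extendVars, hm, Pi.single_apply, this]
  · simp [extendVars, hm, show m ≠ p.1 + 2 by omega]

theorem differentiable_extendVars_apply (k m : ℕ) :
    Differentiable ℝ fun v : Fin (k + 1) → ℝ => extendVars k v m := by
  unfold extendVars
  split_ifs
  exacts [differentiable_apply _, differentiable_const 0]

theorem differentiable_casimir_extendVars (k i : ℕ) :
    Differentiable ℝ fun v : Fin (k + 1) → ℝ => casimir k i (extendVars k v) := by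
  have := differentiable_extendVars_apply k
  unfold casimir
  split_ifs
  · exact this _
  · fun_prop

def casimirDir (k : ℕ) (j : Fin k) : Fin (k + 1) :=
  if j.1 = 0 then Fin.last k else ⟨k - 1 - j.1, by omega⟩

noncomputable def casimirJacobian (k : ℕ) (v : Fin (k + 1) → ℝ) :
    Matrix (Fin k) (Fin k) ℝ :=
  Matrix.of fun i j =>
    fderiv ℝ (fun w => casimir k (i.1 + 1) (extendVars k w)) v (Pi.single (casimirDir k j) 1)

theorem casimirJacobian_apply_of_lt {k : ℕ} (v : Fin (k + 1) → ℝ) {i j : Fin k}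
    (hij : i < j) : casimirJacobian k v i j = 0 := by
  have hj : j.1 ≠ 0 := by omega
  refine (differentiable_casimir_extendVars k _ v).fderiv_apply_eq_of_affine_on_line fun t => ?_
  rw [extendVars_add_smul_single, casimirDir, if_neg hj,
    casimir_add_smul_single_of_add_lt (by omega) (by simp; omega), smul_zero, add_zero]

theorem casimirJacobian_apply_self {k : ℕ} (v : Fin (k + 1) → ℝ) (i : Fin k) :
    casimirJacobian k v i i = v (Fin.last k) ^ i.1 := by
  refine (differentiable_casimir_extendVars k _ v).fderiv_apply_eq_of_affine_on_line fun t => ?_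
  rw [extendVars_add_smul_single, smul_eq_mul]
  by_cases hi : i.1 = 0
  · simp [casimirDir, hi, casimir_one, extendVars_last]
  · have : (casimirDir k i).1 + 2 = k + 2 - (i.1 + 1) := by simp [casimirDir, hi]; omega
    rw [this, casimir_add_smul_single_sub (by omega), extendVars_last, Nat.add_sub_cancel,
      mul_comm]

theorem isUnit_casimirJacobian {k : ℕ} {v : Fin (k + 1) → ℝ} (hv : v (Fin.last k) ≠ 0) :
    IsUnit (casimirJacobian k v) := by
  rw [Matrix.isUnit_iff_isUnit_det, Matrix.det_of_isLowerTriangular _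
    fun i j hij => casimirJacobian_apply_of_lt v hij]
  refine IsUnit.mk0 _ (Finset.prod_ne_zero_iff.2 fun i _ => ?_)
  rw [casimirJacobian_apply_self]
  exact pow_ne_zero i.1 hv

/-- at every point with `P_{k+2} ≠ 0` the derivative of
`(C_1, …, C_k) : ℝ^{k+1} → ℝ^k` is surjective; equivalently the differentials
`dC_1, …, dC_k` are linearly independent there. -/
theorem stmt_3 (k : ℕ) (v : Fin (k + 1) → ℝ)
    (hv : v ⟨k, by omega⟩ ≠ 0) :
    Function.Surjective (fderiv ℝ (casimirMap k) v) ∧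
    LinearIndependent ℝ (fun i : Fin k =>
      fderiv ℝ (fun w => casimir k (i.1 + 1) (extendVars k w)) v) := by
  have hJ := isUnit_casimirJacobian hv
  constructor
  · unfold casimirMap
    rw [fderiv_pi fun i => (differentiable_casimir_extendVars k _).differentiableAt]
    exact LinearMap.surjective_pi_of_isUnit_pairing _ _ hJ
  · exact .of_comp (ContinuousLinearMap.coeLM ℝ)
      (LinearMap.linearIndependent_of_isUnit_pairing _ _ hJ)
end

section
/- Let k ≥ 1 and let P_1,…,P_{k+2}: ℝ → ℝ be differentiable functions satisfying the reduced geodesic equations with P_1(0)² + P_2(0)² = 1. Then P_1(s)² + P_2(s)² = 1 for all s, and for any twice-differentiable plane curve c(s) = (x(s),u(s)) with x' = P_1 and u' = P_2 (a unit-speed curve), the signed curvature of c satisfies x'(s)u''(s) − u'(s)x''(s) = −P_3(s) for all s. -/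
/-!
`(P_1, P_2)` obeys the rotation equation `(f, g)' = ω (g, -f)` with angular speed `ω = P_3`, so
it moves on a circle about the origin: `P_1² + P_2²` is constant, hence `1`. A curve with velocity
`(f, g)` has curvature `f g' - g f' = -ω (f² + g²)`, which is `-P_3` on the unit circle.
-/

section Rotation

variable {f g ω : ℝ → ℝ}

theorem hasDerivAt_sq_add_sq_of_rotation (hf : ∀ s, HasDerivAt f (ω s * g s) s)
    (hg : ∀ s, HasDerivAt g (-(ω s * f s)) s) (s : ℝ) :
    HasDerivAt (fun t => f t ^ 2 + g t ^ 2) 0 s :=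
  (((hf s).fun_pow 2).fun_add ((hg s).fun_pow 2)).congr_deriv (by ring)

theorem sq_add_sq_eq_of_rotation (hf : ∀ s, HasDerivAt f (ω s * g s) s)
    (hg : ∀ s, HasDerivAt g (-(ω s * f s)) s) (s t : ℝ) :
    f s ^ 2 + g s ^ 2 = f t ^ 2 + g t ^ 2 :=
  is_const_of_deriv_eq_zero
    (fun t => (hasDerivAt_sq_add_sq_of_rotation hf hg t).differentiableAt)
    (fun t => (hasDerivAt_sq_add_sq_of_rotation hf hg t).deriv) s t

theorem curvature_eq_of_rotation (hf : ∀ s, HasDerivAt f (ω s * g s) s)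
    (hg : ∀ s, HasDerivAt g (-(ω s * f s)) s) {x u : ℝ → ℝ}
    (hx : ∀ s, HasDerivAt x (f s) s) (hu : ∀ s, HasDerivAt u (g s) s) (s : ℝ) :
    deriv x s * deriv (deriv u) s - deriv u s * deriv (deriv x) s =
      -(ω s * (f s ^ 2 + g s ^ 2)) := by
  have hdx : deriv x = f := funext fun t => (hx t).deriv
  have hdu : deriv u = g := funext fun t => (hu t).deriv
  rw [hdx, hdu, (hf s).deriv, (hg s).deriv]
  ring

end Rotation

theorem ReducedGeodesic.hasDerivAt_two {k : ℕ} {P : ℕ → ℝ → ℝ} (hP : ReducedGeodesic k P)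
    (hk : 1 ≤ k) (s : ℝ) : HasDerivAt (P 2) (-(P 3 s * P 1 s)) s := by
  rw [mul_comm]
  exact hP.2.1 2 le_rfl (by omega) s

/-- along a solution of the reduced geodesic equations with
`P_1(0)² + P_2(0)² = 1` one has `P_1² + P_2² ≡ 1`, and for any plane curve
`c = (x,u)` with `x' = P_1`, `u' = P_2` (a unit-speed curve), the signed curvature
`x'u'' − u'x''` equals `−P_3`. -/
theorem stmt_8 (k : ℕ) (hk : 1 ≤ k) (P : ℕ → ℝ → ℝ)
    (hP : ReducedGeodesic k P) (h0 : P 1 0 ^ 2 + P 2 0 ^ 2 = 1) :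
    (∀ s : ℝ, P 1 s ^ 2 + P 2 s ^ 2 = 1) ∧
    (∀ x u : ℝ → ℝ,
      (∀ s : ℝ, HasDerivAt x (P 1 s) s) → (∀ s : ℝ, HasDerivAt u (P 2 s) s) →
      ∀ s : ℝ,
        deriv x s * deriv (deriv u) s - deriv u s * deriv (deriv x) s = -(P 3 s)) := by
  have h1 := hP.1
  have h2 := hP.hasDerivAt_two hk
  have hunit (s : ℝ) : P 1 s ^ 2 + P 2 s ^ 2 = 1 := (sq_add_sq_eq_of_rotation h1 h2 s 0).trans h0
  refine ⟨hunit, fun x u hx hu s => ?_⟩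
  rw [curvature_eq_of_rotation h1 h2 hx hu s, hunit, mul_one]
end

section
/- Let k ≥ 1, let P_1,…,P_{k+2}: ℝ → ℝ be differentiable functions satisfying the reduced geodesic equations, and let x: ℝ → ℝ be differentiable with x'(s) = P_1(s) for all s. Then there exists a real polynomial p of degree at most k−1 such that P_3(s) = p(x(s)) for all s ∈ ℝ. In particular, the signed curvature −P_3 of the planar projection of the corresponding sub-Riemannian geodesic of J^k is a polynomial of degree at most k−1 in the coordinate x evaluated along the curve. -/
open Polynomial

namespace Polynomial

noncomputable def antiderivative (q : ℝ[X]) : ℝ[X] :=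
  q.sum fun n a => monomial (n + 1) (a / (n + 1))

@[simp]
theorem derivative_antiderivative (q : ℝ[X]) : derivative (antiderivative q) = q := by
  have hmonomial (n : ℕ) (a : ℝ) :
      derivative (monomial (n + 1) (a / (n + 1))) = monomial n a := by
    rw [derivative_monomial_succ]
    congr 1
    field_simp
  simp only [antiderivative, Polynomial.sum, map_sum, hmonomial]
  exact q.sum_monomial_eq

theorem natDegree_antiderivative_le (q : ℝ[X]) :
    (antiderivative q).natDegree ≤ q.natDegree + 1 :=
  natDegree_sum_le_of_forall_le _ _ fun n hn =>
    (natDegree_monomial_le _).trans (Nat.succ_le_succ (le_natDegree_of_mem_supp n hn))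

end Polynomial

theorem eq_const_of_hasDerivAt_zero {f : ℝ → ℝ} (hf : ∀ s, HasDerivAt f 0 s) (s : ℝ) :
    f s = f 0 :=
  is_const_of_deriv_eq_zero (fun t => (hf t).differentiableAt) (fun t => (hf t).deriv) s 0

theorem exists_eval_comp_eq_of_hasDerivAt {f x v : ℝ → ℝ} {q : ℝ[X]}
    (hx : ∀ s, HasDerivAt x (v s) s) (hf : ∀ s, HasDerivAt f (v s * q.eval (x s)) s) :
    ∃ r : ℝ[X], r.natDegree ≤ q.natDegree + 1 ∧ ∀ s, f s = r.eval (x s) := by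
  set R := antiderivative q
  have hdiff (s : ℝ) : HasDerivAt (fun t => f t - R.eval (x t)) 0 s :=
    ((hf s).sub ((R.hasDerivAt (x s)).comp s (hx s))).congr_deriv
      (by rw [derivative_antiderivative]; ring)
  refine ⟨R + C (f 0 - R.eval (x 0)), ?_, fun s => ?_⟩
  · exact (natDegree_add_C (p := R)).le.trans (natDegree_antiderivative_le q)
  · have := eq_const_of_hasDerivAt_zero hdiff s
    simp only [eval_add, eval_C]
    linarith

theorem ReducedGeodesic.exists_eval_comp_eq {k : ℕ} {P : ℕ → ℝ → ℝ} (hP : ReducedGeodesic k P)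
    {x : ℝ → ℝ} (hx : ∀ s, HasDerivAt x (P 1 s) s) {n : ℕ} (hn : n ≤ k) :
    ∃ p : ℝ[X], p.natDegree ≤ n ∧ ∀ s, P (k + 2 - n) s = p.eval (x s) := by
  induction n with
  | zero =>
    exact ⟨C (P (k + 2) 0), by simp, fun s => by simpa using eq_const_of_hasDerivAt_zero hP.2.2 s⟩
  | succ n ih =>
    obtain ⟨q, hq_deg, hq⟩ := ih (by omega)
    have hderiv (s : ℝ) : HasDerivAt (P (k + 2 - (n + 1))) (P 1 s * (-q).eval (x s)) s := by
      have := hP.2.1 (k + 2 - (n + 1)) (by omega) (by omega) s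
      rwa [show k + 2 - (n + 1) + 1 = k + 2 - n by omega, hq, ← mul_neg, ← eval_neg] at this
    obtain ⟨r, hr_deg, hr⟩ := exists_eval_comp_eq_of_hasDerivAt hx hderiv
    exact ⟨r, hr_deg.trans (by rw [natDegree_neg]; omega), hr⟩

/-- along a solution of the reduced geodesic equations, if `x' = P_1`
then `P_3` (minus the curvature of the planar projection of the geodesic) is a
polynomial of degree at most `k-1` in `x` evaluated along the curve. -/
theorem stmt_9 (k : ℕ) (hk : 1 ≤ k) (P : ℕ → ℝ → ℝ) (hP : ReducedGeodesic k P)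
    (x : ℝ → ℝ) (hx : ∀ s : ℝ, HasDerivAt x (P 1 s) s) :
    ∃ p : Polynomial ℝ, p.natDegree ≤ k - 1 ∧ ∀ s : ℝ, P 3 s = p.eval (x s) := by
  have h3 : k + 2 - (k - 1) = 3 := by omega
  simpa only [h3] using hP.exists_eval_comp_eq hx (n := k - 1) (by omega)
end

section
/- Let k ≥ 1, let F be a real polynomial of degree at most k, and let x: I → ℝ be a differentiable function on an open interval I with |F(x(s))| < 1 and x'(s) = √(1 − F(x(s))²) for all s ∈ I. Define P_1(s) = √(1 − F(x(s))²), P_2(s) = F(x(s)), and P_{i+2}(s) = (−1)^i F^{(i)}(x(s)) for i = 1,…,k, where F^{(i)} is the i-th derivative of F. Then P_1(s)² + P_2(s)² = 1 on I and the functions P_1,…,P_{k+2} satisfy the reduced geodesic equations on I: P_1' = P_3 P_2, P_i' = −P_1 P_{i+1} for 2 ≤ i ≤ k+1, and P_{k+2}' = 0. -/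
/-! Along any differentiable curve `x` the chain rule gives `P_i' = -x' P_{i+1}` for `i ≥ 2`
(the signs `(-1)^i` absorb the alternation), and `P_{k+3} = 0` because `deg F ≤ k`; with
`x' = P_1` these are the equations for `P_2, …, P_{k+2}`. Since `P_1 = √(1 - P_2²)`,
`P_1' = -P_2 P_2' / P_1 = x' P_3 P_2 / P_1 = P_3 P_2`. -/

/-- Given a polynomial `F` and a curve coordinate `x : ℝ → ℝ`, the lifted momenta
(1-based index): `P_1 = √(1 − F(x)²)`, `P_2 = F(x)`, and `P_{i+2} = (−1)^i F^{(i)}(x)`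
for `i ≥ 1`. -/
noncomputable def polyLift (F : Polynomial ℝ) (x : ℝ → ℝ) : ℕ → ℝ → ℝ :=
  fun i s =>
    if i = 1 then Real.sqrt (1 - F.eval (x s) ^ 2)
    else if i = 2 then F.eval (x s)
    else (-1 : ℝ) ^ (i - 2) * ((Polynomial.derivative)^[i - 2] F).eval (x s)

namespace polyLift

open Polynomial

variable (F : ℝ[X]) (x : ℝ → ℝ)

theorem one_eq : polyLift F x 1 = fun s => Real.sqrt (1 - polyLift F x 2 s ^ 2) := by
  funext s
  simp [polyLift]

@[simp]
theorem two_apply (s : ℝ) : polyLift F x 2 s = F.eval (x s) := by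
  simp [polyLift]

theorem of_two_le {i : ℕ} (hi : 2 ≤ i) (s : ℝ) :
    polyLift F x i s = (-1) ^ (i - 2) * (derivative^[i - 2] F).eval (x s) := by
  obtain rfl | hi := hi.eq_or_lt
  · simp
  · simp [polyLift, hi.ne', (show 1 < i by omega).ne']

theorem eq_zero_of_natDegree_add_two_lt {i : ℕ} (hi : F.natDegree + 2 < i) (s : ℝ) :
    polyLift F x i s = 0 := by
  rw [of_two_le F x (by omega), iterate_derivative_eq_zero (by omega), eval_zero, mul_zero]

variable {F x}

theorem one_sq_add_two_sq {s : ℝ} (hs : |F.eval (x s)| ≤ 1) :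
    polyLift F x 1 s ^ 2 + polyLift F x 2 s ^ 2 = 1 := by
  have hsq : polyLift F x 2 s ^ 2 ≤ 1 := by simpa [sq_le_one_iff_abs_le_one] using hs
  rw [one_eq, Real.sq_sqrt (sub_nonneg.mpr hsq)]
  ring

theorem one_pos {s : ℝ} (hs : |F.eval (x s)| < 1) : 0 < polyLift F x 1 s := by
  simpa [one_eq] using hs

theorem hasDerivAt_of_two_le {i : ℕ} (hi : 2 ≤ i) {s d : ℝ} (hx : HasDerivAt x d s) :
    HasDerivAt (polyLift F x i) (-(d * polyLift F x (i + 1) s)) s := by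
  have hP : polyLift F x i = fun t => (-1) ^ (i - 2) * (derivative^[i - 2] F).eval (x t) :=
    funext (of_two_le F x hi)
  have hsucc : i + 1 - 2 = i - 2 + 1 := by omega
  rw [hP, of_two_le F x (by omega), hsucc, pow_succ, Function.iterate_succ_apply']
  refine ((((derivative^[i - 2] F).hasDerivAt (x s)).comp s hx).const_mul
    ((-1 : ℝ) ^ (i - 2))).congr_deriv ?_
  ring

theorem hasDerivAt_one {s d : ℝ} (hs : |F.eval (x s)| < 1) (hx : HasDerivAt x d s) :
    HasDerivAt (polyLift F x 1)
      (d * (polyLift F x 3 s * polyLift F x 2 s) / polyLift F x 1 s) s := by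
  have hP1 := one_pos hs
  rw [one_eq] at hP1 ⊢
  have hP2 : HasDerivAt (polyLift F x 2) (-(d * polyLift F x 3 s)) s :=
    hasDerivAt_of_two_le le_rfl hx
  convert (((hP2.fun_pow 2).const_sub 1).sqrt (Real.sqrt_pos.mp hP1).ne') using 1
  field_simp
  push_cast
  ring

end polyLift

theorem stmt_10_general (k : ℕ) (F : Polynomial ℝ) (hF : F.natDegree ≤ k)
    (I : Set ℝ) (x : ℝ → ℝ)
    (hxF : ∀ s ∈ I, |F.eval (x s)| < 1)
    (hx : ∀ s ∈ I, HasDerivAt x (Real.sqrt (1 - F.eval (x s) ^ 2)) s) :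
    (∀ s ∈ I, polyLift F x 1 s ^ 2 + polyLift F x 2 s ^ 2 = 1) ∧
    (∀ s ∈ I, HasDerivAt (polyLift F x 1) (polyLift F x 3 s * polyLift F x 2 s) s) ∧
    (∀ (i : ℕ), 2 ≤ i → i ≤ k + 1 → ∀ s ∈ I,
      HasDerivAt (polyLift F x i) (-(polyLift F x 1 s * polyLift F x (i + 1) s)) s) ∧
    (∀ s ∈ I, HasDerivAt (polyLift F x (k + 2)) 0 s) := by
  have hx' : ∀ s ∈ I, HasDerivAt x (polyLift F x 1 s) s := hx
  refine ⟨fun s hs => ?_, fun s hs => ?_, fun i hi _ s hs => ?_, fun s hs => ?_⟩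
  · exact polyLift.one_sq_add_two_sq (hxF s hs).le
  · have hP1 := (polyLift.one_pos (hxF s hs)).ne'
    simpa only [mul_div_cancel_left₀ _ hP1] using polyLift.hasDerivAt_one (hxF s hs) (hx' s hs)
  · exact polyLift.hasDerivAt_of_two_le hi (hx' s hs)
  · have hvanish := polyLift.eq_zero_of_natDegree_add_two_lt F x (i := k + 2 + 1) (by omega) s
    simpa [hvanish] using polyLift.hasDerivAt_of_two_le (F := F) (i := k + 2) (by omega) (hx' s hs)

/-- if `F` is a polynomial of degree at most `k` and `x` solves
`x' = √(1 − F(x)²)` with `|F(x)| < 1` on an open interval `I`, then the lifted momenta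
`P_1, …, P_{k+2}` satisfy `P_1² + P_2² = 1` and the reduced geodesic equations on `I`:
`P_1' = P_3 P_2`, `P_i' = −P_1 P_{i+1}` for `2 ≤ i ≤ k+1`, and `P_{k+2}' = 0`. -/
theorem stmt_10 (k : ℕ) (hk : 1 ≤ k) (F : Polynomial ℝ) (hF : F.natDegree ≤ k)
    (I : Set ℝ) (hIopen : IsOpen I) (hIconn : I.OrdConnected) (x : ℝ → ℝ)
    (hxF : ∀ s ∈ I, |F.eval (x s)| < 1)
    (hx : ∀ s ∈ I, HasDerivAt x (Real.sqrt (1 - F.eval (x s) ^ 2)) s) :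
    (∀ s ∈ I, polyLift F x 1 s ^ 2 + polyLift F x 2 s ^ 2 = 1) ∧
    (∀ s ∈ I, HasDerivAt (polyLift F x 1) (polyLift F x 3 s * polyLift F x 2 s) s) ∧
    (∀ (i : ℕ), 2 ≤ i → i ≤ k + 1 → ∀ s ∈ I,
      HasDerivAt (polyLift F x i) (-(polyLift F x 1 s * polyLift F x (i + 1) s)) s) ∧
    (∀ s ∈ I, HasDerivAt (polyLift F x (k + 2)) 0 s) :=
  stmt_10_general k F hF I x hxF hx
end

section
/- Let F: ℝ → ℝ be continuously differentiable, let x_0 < x_1 be real numbers with |F(y)| ≤ 1 for all y ∈ [x_0,x_1], and suppose there is ε > 0 such that |F(y)| > 1 for all y ∈ (x_0 − ε, x_0) ∪ (x_1, x_1 + ε). Let (x,θ): ℝ → ℝ² be a solution of x' = cos θ, θ' = F'(x) with x(0) ∈ [x_0,x_1] and sin θ(0) = F(x(0)). Then x(s) ∈ [x_0,x_1] for all s ∈ ℝ; that is, the curve is bounded in the x-direction. -/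
/-!
Along a solution the quantity `sin θ - F ∘ x` is conserved, and it vanishes at `s = 0`, so
`|F (x s)| = |sin θ s| ≤ 1` for every `s`. The range of `x` is an interval containing `x 0`;
if it left `[x₀, x₁]` it would cross one of the strips next to it, where `|F| > 1`.
-/

open Real Set

theorem sin_sub_comp_eq_of_hasDerivAt {F x θ : ℝ → ℝ} (hF : Differentiable ℝ F)
    (hx : ∀ s, HasDerivAt x (cos (θ s)) s) (hθ : ∀ s, HasDerivAt θ (deriv F (x s)) s)
    (s t : ℝ) : sin (θ s) - F (x s) = sin (θ t) - F (x t) := by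
  have hderiv : ∀ s, HasDerivAt (fun s => sin (θ s) - F (x s)) 0 s := fun s => by
    have h := (hθ s).sin.sub ((hF (x s)).hasDerivAt.comp s (hx s))
    rwa [mul_comm, sub_self] at h
  exact is_const_of_deriv_eq_zero (fun s => (hderiv s).differentiableAt)
    (fun s => (hderiv s).deriv) s t

theorem IsPreconnected.le_of_forall_notMem_Ioo_sub {S : Set ℝ} (hS : IsPreconnected S)
    {a x₀ ε : ℝ} (hε : 0 < ε) (ha : a ∈ S) (hxa : x₀ ≤ a)
    (hgap : ∀ y ∈ S, y ∉ Ioo (x₀ - ε) x₀) : ∀ y ∈ S, x₀ ≤ y := by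
  intro y hy
  by_contra! hyx
  have hc : max y (x₀ - ε / 2) ∈ S :=
    hS.Icc_subset hy ha ⟨le_max_left _ _, (max_lt hyx (by linarith)).le.trans hxa⟩
  exact hgap _ hc ⟨lt_max_of_lt_right (by linarith), max_lt hyx (by linarith)⟩

theorem IsPreconnected.le_of_forall_notMem_Ioo_add {S : Set ℝ} (hS : IsPreconnected S)
    {a x₁ ε : ℝ} (hε : 0 < ε) (ha : a ∈ S) (hax : a ≤ x₁)
    (hgap : ∀ y ∈ S, y ∉ Ioo x₁ (x₁ + ε)) : ∀ y ∈ S, y ≤ x₁ := by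
  intro y hy
  by_contra! hxy
  have hc : min y (x₁ + ε / 2) ∈ S :=
    hS.Icc_subset ha hy ⟨hax.trans (lt_min hxy (by linarith)).le, min_le_left _ _⟩
  exact hgap _ hc ⟨lt_min hxy (by linarith), min_lt_of_right_lt (by linarith)⟩

theorem IsPreconnected.subset_Icc_of_forall_notMem_Ioo {S : Set ℝ} (hS : IsPreconnected S)
    {a x₀ x₁ ε : ℝ} (hε : 0 < ε) (ha : a ∈ S ∩ Icc x₀ x₁)
    (hgap : ∀ y ∈ S, y ∉ Ioo (x₀ - ε) x₀ ∪ Ioo x₁ (x₁ + ε)) : S ⊆ Icc x₀ x₁ :=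
  fun y hy =>
    ⟨hS.le_of_forall_notMem_Ioo_sub hε ha.1 ha.2.1 (fun z hz hz' => hgap z hz (Or.inl hz')) y hy,
      hS.le_of_forall_notMem_Ioo_add hε ha.1 ha.2.2 (fun z hz hz' => hgap z hz (Or.inr hz')) y hy⟩

theorem stmt_13_general (F : ℝ → ℝ) (hF : ContDiff ℝ 1 F)
    (x₀ x₁ : ℝ)
    (ε : ℝ) (hε : 0 < ε)
    (hout : ∀ y ∈ Set.Ioo (x₀ - ε) x₀ ∪ Set.Ioo x₁ (x₁ + ε), |F y| > 1)
    (x θ : ℝ → ℝ)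
    (hx : ∀ s : ℝ, HasDerivAt x (Real.cos (θ s)) s)
    (hθ : ∀ s : ℝ, HasDerivAt θ (deriv F (x s)) s)
    (h0 : x 0 ∈ Set.Icc x₀ x₁)
    (hsin : Real.sin (θ 0) = F (x 0)) :
    ∀ s : ℝ, x s ∈ Set.Icc x₀ x₁ := by
  have hsin_eq : ∀ s, sin (θ s) = F (x s) := fun s => by
    linarith [sin_sub_comp_eq_of_hasDerivAt (hF.differentiable one_ne_zero) hx hθ s 0]
  have hcont : Continuous x := continuous_iff_continuousAt.mpr fun s => (hx s).continuousAt
  have hrange : range x ⊆ Icc x₀ x₁ := by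
    refine (isPreconnected_range hcont).subset_Icc_of_forall_notMem_Ioo hε
      ⟨mem_range_self 0, h0⟩ ?_
    rintro _ ⟨t, rfl⟩ hgap
    exact (hout _ hgap).not_ge (hsin_eq t ▸ abs_sin_le_one (θ t))
  exact fun s => hrange (mem_range_self s)

/-- let `F` be `C¹` with `|F| ≤ 1` on `[x₀,x₁]` and `|F| > 1` just outside
`[x₀,x₁]` (on `(x₀−ε,x₀) ∪ (x₁,x₁+ε)`).  Then every global solution of the planar
curvature system `x' = cos θ`, `θ' = F'(x)` starting in `[x₀,x₁]` with
`sin θ(0) = F(x(0))` stays in `[x₀,x₁]` for all time: the curve is bounded in the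
`x`-direction. -/
theorem stmt_13 (F : ℝ → ℝ) (hF : ContDiff ℝ 1 F)
    (x₀ x₁ : ℝ) (hx01 : x₀ < x₁)
    (hin : ∀ y ∈ Set.Icc x₀ x₁, |F y| ≤ 1)
    (ε : ℝ) (hε : 0 < ε)
    (hout : ∀ y ∈ Set.Ioo (x₀ - ε) x₀ ∪ Set.Ioo x₁ (x₁ + ε), |F y| > 1)
    (x θ : ℝ → ℝ)
    (hx : ∀ s : ℝ, HasDerivAt x (Real.cos (θ s)) s)
    (hθ : ∀ s : ℝ, HasDerivAt θ (deriv F (x s)) s)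
    (h0 : x 0 ∈ Set.Icc x₀ x₁)
    (hsin : Real.sin (θ 0) = F (x 0)) :
    ∀ s : ℝ, x s ∈ Set.Icc x₀ x₁ :=
  stmt_13_general F hF x₀ x₁ ε hε hout x θ hx hθ h0 hsin
end

section
/- Let k ≥ 1, let F be a nonconstant real polynomial of degree at most k, and let x_0 ∈ ℝ with F'(x_0) = 0 and |F(x_0)| ≤ 1. Define constants P_1 = √(1 − F(x_0)²), P_2 = F(x_0), and P_{i+2} = (−1)^i F^{(i)}(x_0) for i = 1,…,k. Then the constant functions P_1,…,P_{k+2} solve the reduced geodesic equations (i.e. the point is an equilibrium of the reduced system) if and only if F(x_0) = 1 or F(x_0) = −1. -/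
/-- The constant momenta associated to a polynomial `F` at a point `x₀` (1-based index):
`P_1 = √(1 − F(x₀)²)`, `P_2 = F(x₀)`, and `P_{i+2} = (−1)^i F^{(i)}(x₀)` for `i ≥ 1`. -/
noncomputable def eqPoint (F : Polynomial ℝ) (x₀ : ℝ) : ℕ → ℝ :=
  fun i =>
    if i = 1 then Real.sqrt (1 - F.eval x₀ ^ 2)
    else if i = 2 then F.eval x₀
    else (-1 : ℝ) ^ (i - 2) * ((Polynomial.derivative)^[i - 2] F).eval x₀

/-!
Constant momenta have zero derivative, so the reduced equations collapse to the algebraic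
conditions `P₃ P₂ = 0` and `P₁ P_{i+1} = 0`. If `|F(x₀)| < 1` then `P₁ ≠ 0`, and the condition
for `i = deg F + 1` asks the top derivative `F^{(deg F)}`, a nonzero constant, to vanish.
If `F(x₀) = ±1` then `P₁ = 0`, and `P₃ = -F'(x₀) = 0` because `x₀` is critical.
-/

open Polynomial

theorem reducedGeodesic_const_iff (k : ℕ) (p : ℕ → ℝ) :
    ReducedGeodesic k (fun i _ => p i) ↔
      p 3 * p 2 = 0 ∧ ∀ i, 2 ≤ i → i ≤ k + 1 → p 1 * p (i + 1) = 0 := by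
  have hasDerivAt_const_iff (a c : ℝ) : (∀ s : ℝ, HasDerivAt (fun _ => a) c s) ↔ c = 0 :=
    ⟨fun h => (h 0).unique (hasDerivAt_const 0 a), fun hc s => hc ▸ hasDerivAt_const s a⟩
  simp only [ReducedGeodesic, hasDerivAt_const_iff, neg_eq_zero, and_true]

theorem Polynomial.eval_iterate_derivative_natDegree_ne_zero {R : Type*} [CommRing R]
    [NoZeroDivisors R] [CharZero R] {p : R[X]} (hp : p ≠ 0) (x : R) :
    (derivative^[p.natDegree] p).eval x ≠ 0 := by
  have hconst : derivative^[p.natDegree] p = C (p.natDegree.factorial • p.leadingCoeff) := by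
    refine (eq_C_of_natDegree_le_zero ?_).trans ?_
    · simpa using natDegree_iterate_derivative p p.natDegree
    · simp [coeff_iterate_derivative, Nat.descFactorial_self]
  rw [hconst, eval_C, nsmul_eq_mul]
  exact mul_ne_zero (by exact_mod_cast p.natDegree.factorial_ne_zero) (leadingCoeff_ne_zero.2 hp)

theorem Real.sqrt_one_sub_sq_eq_zero_iff {a : ℝ} (ha : |a| ≤ 1) :
    √(1 - a ^ 2) = 0 ↔ a = 1 ∨ a = -1 := by
  rw [Real.sqrt_eq_zero', sub_nonpos, one_le_sq_iff_one_le_abs, ← abs_eq zero_le_one]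
  exact ⟨ha.antisymm, fun h => h.ge⟩

section eqPoint

variable (F : ℝ[X]) (x₀ : ℝ)

theorem eqPoint_one : eqPoint F x₀ 1 = √(1 - F.eval x₀ ^ 2) := rfl

theorem eqPoint_three : eqPoint F x₀ 3 = -F.derivative.eval x₀ := by
  simp [eqPoint]

theorem eqPoint_add_two {n : ℕ} (hn : n ≠ 0) :
    eqPoint F x₀ (n + 2) = (-1) ^ n * (derivative^[n] F).eval x₀ := by
  simp [eqPoint, hn]

end eqPoint

theorem stmt_15_general (k : ℕ) (F : Polynomial ℝ)
    (hdeg : F.natDegree ≤ k) (hnc : F.natDegree ≠ 0)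
    (x₀ : ℝ) (hcrit : F.derivative.eval x₀ = 0) (hbd : |F.eval x₀| ≤ 1) :
    ReducedGeodesic k (fun i _ => eqPoint F x₀ i) ↔
      (F.eval x₀ = 1 ∨ F.eval x₀ = -1) := by
  rw [reducedGeodesic_const_iff, ← Real.sqrt_one_sub_sq_eq_zero_iff hbd, ← eqPoint_one]
  constructor
  · rintro ⟨-, hmomenta⟩
    have htop := hmomenta (F.natDegree + 1) (by omega) (by omega)
    rw [eqPoint_add_two F x₀ hnc] at htop
    have hF : F ≠ 0 := fun h => hnc (by simp [h])
    have hlead := F.eval_iterate_derivative_natDegree_ne_zero hF x₀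
    simpa [hlead] using htop
  · intro hP₁
    refine ⟨by simp [eqPoint_three, hcrit], fun i _ _ => by simp [hP₁]⟩

/-- for a nonconstant polynomial `F` of degree at most `k` with
`F'(x₀) = 0` and `|F(x₀)| ≤ 1`, the constant functions with values
`P_1 = √(1 − F(x₀)²)`, `P_2 = F(x₀)`, `P_{i+2} = (−1)^i F^{(i)}(x₀)` solve the reduced
geodesic equations (i.e. give an equilibrium of the reduced system) if and only if
`F(x₀) = 1` or `F(x₀) = −1`. -/
theorem stmt_15 (k : ℕ) (hk : 1 ≤ k) (F : Polynomial ℝ)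
    (hdeg : F.natDegree ≤ k) (hnc : F.natDegree ≠ 0)
    (x₀ : ℝ) (hcrit : F.derivative.eval x₀ = 0) (hbd : |F.eval x₀| ≤ 1) :
    ReducedGeodesic k (fun i _ => eqPoint F x₀ i) ↔
      (F.eval x₀ = 1 ∨ F.eval x₀ = -1) :=
  stmt_15_general k F hdeg hnc x₀ hcrit hbd
end

section
/- Let m ≥ 2 and let F(x) = (x^{2m} − m x²)/(m − 1), a polynomial of even degree 2m. Then F(1) = F(−1) = −1, F'(1) = F'(−1) = 0, and |F(y)| < 1 for all y ∈ (−1,1). Moreover there exists a global solution (x,u,θ): ℝ → ℝ³ of x' = cos θ, u' = sin θ, θ' = F'(x) with sin θ(s) = F(x(s)), cos θ(s) > 0 and −1 < x(s) < 1 for all s, x(s) → −1 as s → −∞, and x(s) → 1 as s → +∞; hence the plane curve (x(s),u(s)) is a graph over the interval (−1,1), giving an infinite geodesic graph at the even jet level k = 2m ≥ 4. -/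
open Filter

/-- The even-degree polynomial function `F(y) = (y^{2m} − m y²)/(m−1)` generating an
infinite geodesic graph at the even jet level `k = 2m`. -/
noncomputable def evenGraphF (m : ℕ) : ℝ → ℝ :=
  fun y => (y ^ (2 * m) - (m : ℝ) * y ^ 2) / ((m : ℝ) - 1)

/-!
Along a solution normalized by `sin θ = F(x)` and `cos θ > 0` one has
`x' = cos θ = √(1 - F(x)²)`, so the solution is obtained by inverting the arc length
`y ↦ ∫₀ʸ (1 - F²)^(-1/2)` on `(-1, 1)` and putting `θ = arcsin (F x)`; the ODE for `θ` is
then the chain rule. For `F = evenGraphF m` and `s = 1 - y²` one has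
`(m - 1)(1 + F(y)) = (1 - s)^m - 1 + m s`, and Bernoulli-type bounds on `(1 - s)^m` give
`-1 < F ≤ 0` on `(-1, 1)` and `1 - F(y)² ≤ (2m(1 - y))²`. Hence the arc length diverges
logarithmically at `±1`, its inverse is defined on all of `ℝ`, and `x → ±1` as `s → ±∞`.
-/

open Set Real Topology

lemma le_one_sub_pow_succ {s : ℝ} (hs : s ≤ 1) (n : ℕ) :
    1 - (n + 1) * s + n * s ^ 2 ≤ (1 - s) ^ (n + 1) := by
  have h := mul_le_mul_of_nonneg_right (one_add_mul_le_pow (a := -s) (by linarith) n)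
    (sub_nonneg.2 hs)
  rw [← sub_eq_add_neg, ← pow_succ] at h
  linarith

lemma one_sub_pow_le {s : ℝ} (hs₀ : 0 ≤ s) (hs₁ : s ≤ 1) (n : ℕ) :
    (1 - s) ^ n ≤ 1 - n * s + n.choose 2 * s ^ 2 := by
  induction n with
  | zero => simp
  | succ n ih =>
    rw [pow_succ, Nat.choose_succ_succ, Nat.choose_one_right]
    push_cast
    nlinarith [mul_le_mul_of_nonneg_right ih (sub_nonneg.2 hs₁),
      mul_nonneg (Nat.cast_nonneg (α := ℝ) (n.choose 2)) (pow_nonneg hs₀ 3)]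

lemma sqrt_one_sub_sq_pos {c : ℝ} (hc : |c| < 1) : 0 < √(1 - c ^ 2) :=
  sqrt_pos.2 (sub_pos.2 ((sq_lt_one_iff_abs_lt_one c).2 hc))

lemma ContinuousOn.surjOn_univ_of_unbounded {f : ℝ → ℝ} {s : Set ℝ} [hs : s.OrdConnected]
    (hf : ContinuousOn f s) (hbot : ∀ r, ∃ y ∈ s, f y ≤ r) (htop : ∀ r, ∃ y ∈ s, r ≤ f y) :
    SurjOn f s univ := by
  intro r _
  obtain ⟨y₁, hy₁, h₁⟩ := hbot r
  obtain ⟨y₂, hy₂, h₂⟩ := htop r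
  obtain ⟨y, hy, rfl⟩ := intermediate_value_uIcc (hf.mono (hs.uIcc_subset hy₁ hy₂))
    (mem_uIcc_of_le h₁ h₂)
  exact ⟨y, hs.uIcc_subset hy₁ hy₂ hy, rfl⟩

lemma exists_strictMono_hasDerivAt_of_surjOn {h h' : ℝ → ℝ} {a b : ℝ}
    (hd : ∀ y ∈ Ioo a b, HasDerivAt h (h' y) y) (hpos : ∀ y ∈ Ioo a b, 0 < h' y)
    (hsurj : SurjOn h (Ioo a b) univ) :
    ∃ x : ℝ → ℝ, StrictMono x ∧ range x = Ioo a b ∧ ∀ s, HasDerivAt x (h' (x s))⁻¹ s := by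
  have hmono : StrictMonoOn h (Ioo a b) :=
    strictMonoOn_of_deriv_pos (convex_Ioo a b)
      (fun y hy => (hd y hy).continuousAt.continuousWithinAt)
      (fun y hy => by rw [interior_Ioo] at hy; rw [(hd y hy).deriv]; exact hpos y hy)
  choose x hxI hhx using fun s => hsurj (mem_univ s)
  have hxmono : StrictMono x := fun s t hst =>
    (hmono.lt_iff_lt (hxI s) (hxI t)).1 (by rwa [hhx, hhx])
  have hrange : range x = Ioo a b :=
    (range_subset_iff.2 hxI).antisymm fun y hy => ⟨h y, hmono.injOn (hxI _) hy (hhx _)⟩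
  refine ⟨x, hxmono, hrange, fun s => ?_⟩
  have hcont : ContinuousAt x s :=
    (hxmono.strictMonoOn univ).continuousAt_of_image_mem_nhds univ_mem
      (by rw [image_univ, hrange]; exact isOpen_Ioo.mem_nhds (hxI s))
  exact (hd _ (hxI s)).of_local_left_inverse hcont (hpos _ (hxI s)).ne'
    (Eventually.of_forall hhx)

section MonotoneRange

variable {α β : Type*} [Preorder α] [ConditionallyCompleteLinearOrder β] [TopologicalSpace β]
  [OrderTopology β] [DenselyOrdered β] {x : α → β} {a b : β}

lemma Monotone.tendsto_atTop_of_range_eq_Ioo (hx : Monotone x) (hab : a < b)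
    (hr : range x = Ioo a b) : Tendsto x atTop (𝓝 b) := by
  have h := tendsto_atTop_ciSup hx (hr ▸ bddAbove_Ioo)
  rwa [← sSup_range, hr, csSup_Ioo hab] at h

lemma Monotone.tendsto_atBot_of_range_eq_Ioo (hx : Monotone x) (hab : a < b)
    (hr : range x = Ioo a b) : Tendsto x atBot (𝓝 a) := by
  have h := tendsto_atBot_ciInf hx (hr ▸ bddBelow_Ioo)
  rwa [← sInf_range, hr, csInf_Ioo hab] at h

end MonotoneRange

/-- The unit-speed graph solution with `x(0) = 0` has `x' = cos θ = √(1 - F(x)²)`, so the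
arc length `s` at which it reaches `x = y` is this integral. -/
noncomputable def graphArcLength (F : ℝ → ℝ) (y : ℝ) : ℝ :=
  ∫ t in (0 : ℝ)..y, (√(1 - F t ^ 2))⁻¹

lemma integral_inv_mul_one_sub (c : ℝ) {y : ℝ} (hy : y < 1) :
    ∫ t in (0 : ℝ)..y, (c * (1 - t))⁻¹ = -log (1 - y) / c := by
  simp_rw [mul_inv, intervalIntegral.integral_const_mul]
  rw [intervalIntegral.integral_comp_sub_left (fun t => t⁻¹), sub_zero,
    integral_inv_of_pos (by linarith) one_pos, one_div, log_inv]
  ring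

section GraphArcLength

variable {F : ℝ → ℝ} {a b : ℝ}

lemma continuousOn_inv_sqrt_one_sub_sq {s : Set ℝ} (hF : Continuous F)
    (hF₁ : ∀ y ∈ s, |F y| < 1) : ContinuousOn (fun t => (√(1 - F t ^ 2))⁻¹) s :=
  (continuous_const.sub (hF.pow 2)).sqrt.continuousOn.inv₀ fun y hy =>
    (sqrt_one_sub_sq_pos (hF₁ y hy)).ne'

lemma hasDerivAt_graphArcLength (hF : Continuous F) (hF₁ : ∀ y ∈ Ioo a b, |F y| < 1)
    (h₀ : (0 : ℝ) ∈ Ioo a b) {y : ℝ} (hy : y ∈ Ioo a b) :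
    HasDerivAt (graphArcLength F) (√(1 - F y ^ 2))⁻¹ y :=
  have hcont := continuousOn_inv_sqrt_one_sub_sq hF hF₁
  intervalIntegral.integral_hasDerivAt_right
    ((hcont.mono (ordConnected_Ioo.uIcc_subset h₀ hy)).intervalIntegrable)
    (hcont.stronglyMeasurableAtFilter isOpen_Ioo y hy)
    (hcont.continuousAt (isOpen_Ioo.mem_nhds hy))

lemma graphArcLength_neg (hF : ∀ y, F (-y) = F y) (y : ℝ) :
    graphArcLength F (-y) = -graphArcLength F y := by
  have h := intervalIntegral.integral_comp_neg (a := 0) (b := y) fun t => (√(1 - F t ^ 2))⁻¹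
  simp only [hF, neg_zero] at h
  rw [graphArcLength, graphArcLength, intervalIntegral.integral_symm, h]

lemma neg_log_div_le_graphArcLength (hF : Continuous F) (hF₁ : ∀ t ∈ Ico 0 1, |F t| < 1)
    {c : ℝ} (hc : 0 < c) (hbound : ∀ t ∈ Ico 0 1, √(1 - F t ^ 2) ≤ c * (1 - t))
    {y : ℝ} (hy : y ∈ Ico 0 1) : -log (1 - y) / c ≤ graphArcLength F y := by
  have hsub : Icc 0 y ⊆ Ico 0 1 := Icc_subset_Ico_right hy.2
  rw [← integral_inv_mul_one_sub c hy.2]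
  refine intervalIntegral.integral_mono_on hy.1 ?_ ?_ fun t ht => ?_
  · refine ContinuousOn.intervalIntegrable (ContinuousOn.inv₀ (by fun_prop) fun t ht => ?_)
    rw [uIcc_of_le hy.1] at ht
    exact mul_ne_zero hc.ne' (by linarith [hsub ht |>.2])
  · exact (continuousOn_inv_sqrt_one_sub_sq hF hF₁).mono (uIcc_of_le hy.1 ▸ hsub)
      |>.intervalIntegrable
  · exact inv_anti₀ (sqrt_one_sub_sq_pos (hF₁ t (hsub ht))) (hbound t (hsub ht))

end GraphArcLength

theorem exists_graph_solution {F : ℝ → ℝ} {a b : ℝ} (hF : Differentiable ℝ F)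
    (h₀ : (0 : ℝ) ∈ Ioo a b) (hF₁ : ∀ y ∈ Ioo a b, |F y| < 1)
    (hsurj : SurjOn (graphArcLength F) (Ioo a b) univ) :
    ∃ x u θ : ℝ → ℝ,
      (∀ s : ℝ, HasDerivAt x (cos (θ s)) s ∧ HasDerivAt u (sin (θ s)) s ∧
        HasDerivAt θ (deriv F (x s)) s ∧ sin (θ s) = F (x s) ∧
        0 < cos (θ s) ∧ x s ∈ Ioo a b) ∧
      Tendsto x atBot (𝓝 a) ∧ Tendsto x atTop (𝓝 b) := by
  obtain ⟨x, hmono, hrange, hx⟩ := exists_strictMono_hasDerivAt_of_surjOn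
    (fun _ => hasDerivAt_graphArcLength hF.continuous hF₁ h₀)
    (fun y hy => inv_pos.2 (sqrt_one_sub_sq_pos (hF₁ y hy))) hsurj
  simp only [inv_inv] at hx
  have hxI (s : ℝ) : x s ∈ Ioo a b := hrange ▸ mem_range_self s
  have hF₁x (s : ℝ) : |F (x s)| < 1 := hF₁ _ (hxI s)
  set θ : ℝ → ℝ := fun s => arcsin (F (x s))
  have hcos (s : ℝ) : cos (θ s) = √(1 - F (x s) ^ 2) := cos_arcsin _
  have hθ : Continuous θ :=
    continuous_arcsin.comp (hF.continuous.comp (continuous_iff_continuousAt.2 fun s =>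
      (hx s).continuousAt))
  have hθ' (s : ℝ) : HasDerivAt θ (deriv F (x s)) s := by
    obtain ⟨hlo, hhi⟩ := abs_lt.1 (hF₁x s)
    refine ((hasDerivAt_arcsin hlo.ne' hhi.ne).comp s
      ((hF (x s)).hasDerivAt.comp s (hx s))).congr_deriv ?_
    field_simp [(sqrt_one_sub_sq_pos (hF₁x s)).ne']
  refine ⟨x, fun s => ∫ t in (0 : ℝ)..s, sin (θ t), θ,
    fun s => ⟨?_, ?_, hθ' s, ?_, ?_, hxI s⟩,
    hmono.monotone.tendsto_atBot_of_range_eq_Ioo (h₀.1.trans h₀.2) hrange,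
    hmono.monotone.tendsto_atTop_of_range_eq_Ioo (h₀.1.trans h₀.2) hrange⟩
  · exact hcos s ▸ hx s
  · exact ((continuous_sin.comp hθ).integral_hasStrictDerivAt 0 s).hasDerivAt
  · obtain ⟨hlo, hhi⟩ := abs_le.1 (hF₁x s).le
    exact sin_arcsin hlo hhi
  · exact hcos s ▸ sqrt_one_sub_sq_pos (hF₁x s)

section EvenGraphF

variable {m : ℕ}

lemma evenGraphF_neg (y : ℝ) : evenGraphF m (-y) = evenGraphF m y := by
  simp only [evenGraphF, pow_mul, neg_sq]

lemma evenGraphF_one (hm : 2 ≤ m) : evenGraphF m 1 = -1 := by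
  have hm₁ : (m : ℝ) - 1 ≠ 0 := by
    have : (2 : ℝ) ≤ m := by exact_mod_cast hm
    linarith
  simp only [evenGraphF, one_pow, mul_one]
  field_simp
  ring

lemma evenGraphF_neg_one (hm : 2 ≤ m) : evenGraphF m (-1) = -1 := by
  rw [evenGraphF_neg, evenGraphF_one hm]

lemma hasDerivAt_evenGraphF (y : ℝ) :
    HasDerivAt (evenGraphF m) ((2 * m * y ^ (2 * m - 1) - 2 * m * y) / ((m : ℝ) - 1)) y := by
  refine (((hasDerivAt_pow (2 * m) y).sub ((hasDerivAt_pow 2 y).const_mul (m : ℝ))).div_const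
    ((m : ℝ) - 1)).congr_deriv ?_
  push_cast
  ring

lemma differentiable_evenGraphF : Differentiable ℝ (evenGraphF m) :=
  fun y => (hasDerivAt_evenGraphF y).differentiableAt

lemma deriv_evenGraphF_one : deriv (evenGraphF m) 1 = 0 := by
  simp [(hasDerivAt_evenGraphF 1).deriv]

lemma deriv_evenGraphF_neg_one (hm : 2 ≤ m) : deriv (evenGraphF m) (-1) = 0 := by
  have hodd : Odd (2 * m - 1) := ⟨m - 1, by omega⟩
  rw [(hasDerivAt_evenGraphF (-1)).deriv, hodd.neg_one_pow]
  ring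

lemma neg_one_lt_evenGraphF (hm : 2 ≤ m) {y : ℝ} (hy : y ∈ Ioo (-1) 1) :
    -1 < evenGraphF m y := by
  obtain ⟨k, rfl⟩ : ∃ k, m = k + 1 := ⟨m - 1, by omega⟩
  have hk : (1 : ℝ) ≤ k := by exact_mod_cast (show 1 ≤ k by omega)
  have hs : 0 < 1 - y ^ 2 := by nlinarith [hy.1, hy.2]
  have h := le_one_sub_pow_succ (s := 1 - y ^ 2) (sub_le_self _ (sq_nonneg y)) k
  rw [sub_sub_cancel] at h
  unfold evenGraphF
  rw [lt_div_iff₀ (by push_cast; linarith), pow_mul]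
  push_cast at h ⊢
  nlinarith [mul_pos (show (0 : ℝ) < k by linarith) (pow_pos hs 2)]

lemma evenGraphF_nonpos (hm : 2 ≤ m) {y : ℝ} (hy : y ^ 2 ≤ 1) : evenGraphF m y ≤ 0 := by
  have hpow : (y ^ 2) ^ m ≤ y ^ 2 := pow_le_of_le_one (sq_nonneg y) hy (by omega)
  have hm' : (2 : ℝ) ≤ m := by exact_mod_cast hm
  refine div_nonpos_of_nonpos_of_nonneg ?_ (by linarith)
  rw [pow_mul]
  nlinarith [sq_nonneg y]

lemma abs_evenGraphF_lt_one (hm : 2 ≤ m) {y : ℝ} (hy : y ∈ Ioo (-1) 1) :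
    |evenGraphF m y| < 1 := by
  have hy2 : y ^ 2 ≤ 1 := by nlinarith [hy.1, hy.2]
  rw [abs_lt]
  exact ⟨neg_one_lt_evenGraphF hm hy, (evenGraphF_nonpos hm hy2).trans_lt one_pos⟩

lemma sqrt_one_sub_evenGraphF_sq_le (hm : 2 ≤ m) {y : ℝ} (hy : y ∈ Icc 0 1) :
    √(1 - evenGraphF m y ^ 2) ≤ 2 * m * (1 - y) := by
  have hm' : (2 : ℝ) ≤ m := by exact_mod_cast hm
  have h := one_sub_pow_le (s := 1 - y ^ 2) (by nlinarith [hy.1, hy.2])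
    (sub_le_self _ (sq_nonneg y)) m
  rw [sub_sub_cancel, Nat.cast_choose_two] at h
  have hF : 1 + evenGraphF m y ≤ m / 2 * (1 - y ^ 2) ^ 2 := by
    suffices evenGraphF m y ≤ m / 2 * (1 - y ^ 2) ^ 2 - 1 by linarith
    unfold evenGraphF
    rw [div_le_iff₀ (by linarith), pow_mul]
    nlinarith
  rw [sqrt_le_iff]
  refine ⟨by nlinarith [hy.2], ?_⟩
  calc 1 - evenGraphF m y ^ 2 ≤ 2 * (1 + evenGraphF m y) := by
        nlinarith [sq_nonneg (1 + evenGraphF m y)]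
    _ ≤ m * ((1 - y) ^ 2 * (1 + y) ^ 2) := by nlinarith
    _ ≤ m * ((1 - y) ^ 2 * 2 ^ 2) := by gcongr <;> linarith [hy.1, hy.2]
    _ ≤ (2 * m * (1 - y)) ^ 2 := by nlinarith [sq_nonneg (1 - y)]

end EvenGraphF

lemma surjOn_graphArcLength_evenGraphF {m : ℕ} (hm : 2 ≤ m) :
    SurjOn (graphArcLength (evenGraphF m)) (Ioo (-1) 1) univ := by
  have hF := differentiable_evenGraphF (m := m)
  have hF₁ : ∀ y ∈ Ioo (-1 : ℝ) 1, |evenGraphF m y| < 1 := fun _ => abs_evenGraphF_lt_one hm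
  have hc : (0 : ℝ) < 2 * m := by positivity
  have htop (r : ℝ) : ∃ y ∈ Ioo (-1 : ℝ) 1, r ≤ graphArcLength (evenGraphF m) y := by
    set y := 1 - exp (-(2 * m * |r|))
    have hy : y ∈ Ico 0 1 := ⟨sub_nonneg.2 (exp_le_one_iff.2 (by nlinarith [abs_nonneg r])),
      sub_lt_self _ (exp_pos _)⟩
    refine ⟨y, ⟨by linarith [hy.1], hy.2⟩, ?_⟩
    calc r ≤ -log (1 - y) / (2 * m) := by
          rw [sub_sub_cancel, log_exp, neg_neg, mul_div_cancel_left₀ _ hc.ne']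
          exact le_abs_self r
      _ ≤ graphArcLength (evenGraphF m) y :=
          neg_log_div_le_graphArcLength hF.continuous
            (fun t ht => hF₁ t ⟨by linarith [ht.1], ht.2⟩) hc
            (fun t ht => sqrt_one_sub_evenGraphF_sq_le hm (Ico_subset_Icc_self ht)) hy
  have hbot (r : ℝ) : ∃ y ∈ Ioo (-1 : ℝ) 1, graphArcLength (evenGraphF m) y ≤ r := by
    obtain ⟨y, hy, hry⟩ := htop (-r)
    refine ⟨-y, ⟨by linarith [hy.2], by linarith [hy.1]⟩, ?_⟩
    rw [graphArcLength_neg evenGraphF_neg]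
    linarith
  exact ContinuousOn.surjOn_univ_of_unbounded
    (fun y hy => (hasDerivAt_graphArcLength hF.continuous hF₁ (by norm_num) hy)
      |>.continuousAt.continuousWithinAt) hbot htop

/-- for `m ≥ 2` and `F(y) = (y^{2m} − m y²)/(m−1)` one has
`F(1) = F(−1) = −1`, `F'(±1) = 0`, `|F| < 1` on `(−1,1)`, and there is a global solution
of `x' = cos θ`, `u' = sin θ`, `θ' = F'(x)` with `sin θ = F(x)`, `cos θ > 0`,
`−1 < x < 1`, `x(s) → −1` as `s → −∞` and `x(s) → 1` as `s → +∞`; the plane curve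
`(x,u)` is an infinite geodesic graph at the even jet level `k = 2m ≥ 4`. -/
theorem stmt_18 (m : ℕ) (hm : 2 ≤ m) :
    evenGraphF m 1 = -1 ∧
    evenGraphF m (-1) = -1 ∧
    deriv (evenGraphF m) 1 = 0 ∧
    deriv (evenGraphF m) (-1) = 0 ∧
    (∀ y ∈ Set.Ioo (-1 : ℝ) 1, |evenGraphF m y| < 1) ∧
    ∃ x u θ : ℝ → ℝ,
      (∀ s : ℝ, HasDerivAt x (Real.cos (θ s)) s ∧
        HasDerivAt u (Real.sin (θ s)) s ∧
        HasDerivAt θ (deriv (evenGraphF m) (x s)) s ∧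
        Real.sin (θ s) = evenGraphF m (x s) ∧
        0 < Real.cos (θ s) ∧ x s ∈ Set.Ioo (-1 : ℝ) 1) ∧
      Tendsto x atBot (nhds (-1)) ∧ Tendsto x atTop (nhds 1) :=
  ⟨evenGraphF_one hm, evenGraphF_neg_one hm, deriv_evenGraphF_one, deriv_evenGraphF_neg_one hm,
    fun _ => abs_evenGraphF_lt_one hm,
    exists_graph_solution differentiable_evenGraphF (by norm_num)
      (fun _ => abs_evenGraphF_lt_one hm) (surjOn_graphArcLength_evenGraphF hm)⟩
end

section
/- Let k ≥ 1 and let P_3,…,P_{k+2}: ℝ → ℝ and x: ℝ → ℝ be differentiable functions satisfying x' = P_1 for some continuous P_1: ℝ → ℝ, together with P_i' = −P_1 P_{i+1} for 3 ≤ i ≤ k+1 and P_{k+2}' = 0. Then for each i with 3 ≤ i ≤ k+2 there exists a real polynomial q_i of degree at most k+2−i such that P_i(s) = q_i(x(s)) for all s ∈ ℝ, and these polynomials satisfy q_i' = −q_{i+1} for 3 ≤ i ≤ k+1; in particular P_3(s) = q_3(x(s)) with deg q_3 ≤ k−1, i.e. the k-th derivative of q_3 vanishes identically. -/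
/-- the lower block of the reduced geodesic equations of `J^k` along a
curve with `x' = P_1`: if `P_i' = −P_1 P_{i+1}` for `3 ≤ i ≤ k+1` and `P_{k+2}' = 0`,
then each `P_i` (`3 ≤ i ≤ k+2`) is a polynomial `q_i` of degree at most `k+2−i` in `x`
evaluated along the curve, with `q_i' = −q_{i+1}` for `3 ≤ i ≤ k+1`; in particular
`P_3 = q_3(x)` with `deg q_3 ≤ k−1`, i.e. the `k`-th derivative of `q_3` vanishes. -/
theorem stmt_19 (k : ℕ) (hk : 1 ≤ k)
    (P : ℕ → ℝ → ℝ) (x : ℝ → ℝ) (P₁ : ℝ → ℝ) (hP₁ : Continuous P₁)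
    (hx : ∀ s : ℝ, HasDerivAt x (P₁ s) s)
    (hmid : ∀ (i : ℕ), 3 ≤ i → i ≤ k + 1 →
      ∀ s : ℝ, HasDerivAt (P i) (-(P₁ s * P (i + 1) s)) s)
    (hlast : ∀ s : ℝ, HasDerivAt (P (k + 2)) 0 s) :
    ∃ q : ℕ → Polynomial ℝ,
      (∀ (i : ℕ), 3 ≤ i → i ≤ k + 2 →
        (q i).natDegree ≤ k + 2 - i ∧ ∀ s : ℝ, P i s = (q i).eval (x s)) ∧
      (∀ (i : ℕ), 3 ≤ i → i ≤ k + 1 → Polynomial.derivative (q i) = -(q (i + 1))) ∧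
      (q 3).natDegree ≤ k - 1 ∧ (Polynomial.derivative)^[k] (q 3) = 0 := by
  classical
  set x0 : ℝ := x 0 with hx0
  set q : ℕ → Polynomial ℝ := fun i =>
    ∑ j ∈ Finset.range (k + 3 - i),
      Polynomial.C ((-1) ^ j * P (i + j) 0 / (Nat.factorial j : ℝ)) *
        (Polynomial.X - Polynomial.C x0) ^ j with hq
  -- degree bound
  have hdeg : ∀ i : ℕ, (q i).natDegree ≤ k + 2 - i := by
    intro i
    apply Polynomial.natDegree_sum_le_of_forall_le
    intro j hj
    rw [Finset.mem_range] at hj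
    calc (Polynomial.C ((-1) ^ j * P (i + j) 0 / (Nat.factorial j : ℝ)) *
          (Polynomial.X - Polynomial.C x0) ^ j).natDegree
        ≤ ((Polynomial.X - Polynomial.C x0) ^ j).natDegree :=
          Polynomial.natDegree_C_mul_le _ _
      _ ≤ j := by
          calc ((Polynomial.X - Polynomial.C x0) ^ j).natDegree
              ≤ j * (Polynomial.X - Polynomial.C x0).natDegree :=
                Polynomial.natDegree_pow_le
            _ ≤ j := by rw [Polynomial.natDegree_X_sub_C]; omega
      _ ≤ k + 2 - i := by omega
  -- derivative relation
  have hder : ∀ i : ℕ, i ≤ k + 2 → Polynomial.derivative (q i) = -(q (i + 1)) := by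
    intro i hi
    have hn : k + 3 - i = (k + 2 - i) + 1 := by omega
    have hn' : k + 3 - (i + 1) = k + 2 - i := by omega
    rw [hq]
    simp only [hn, hn']
    rw [map_sum, Finset.sum_range_succ', ← Finset.sum_neg_distrib]
    have h0 : Polynomial.derivative
        (Polynomial.C ((-1) ^ 0 * P (i + 0) 0 / (Nat.factorial 0 : ℝ)) *
          (Polynomial.X - Polynomial.C x0) ^ 0) = 0 := by
      simp
    rw [h0, add_zero]
    refine Finset.sum_congr rfl fun j hj => ?_
    rw [Polynomial.derivative_C_mul, Polynomial.derivative_X_sub_C_pow]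
    have hjj : j + 1 - 1 = j := rfl
    rw [hjj, ← mul_assoc, ← Polynomial.C_mul, ← neg_mul, ← Polynomial.C_neg]
    congr 1
    have hfac : ((Nat.factorial (j + 1) : ℝ)) = (j + 1) * (Nat.factorial j : ℝ) := by
      rw [Nat.factorial_succ]; push_cast; ring
    have hne : (Nat.factorial j : ℝ) ≠ 0 := by
      exact_mod_cast Nat.factorial_ne_zero j
    have hne' : ((j : ℝ) + 1) ≠ 0 := by positivity
    have harg : i + 1 + j = i + (j + 1) := by ring
    rw [harg, hfac]
    push_cast
    field_simp
    ring
  -- evaluation at x0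
  have heval0 : ∀ i : ℕ, i ≤ k + 2 → (q i).eval x0 = P i 0 := by
    intro i hi
    rw [hq]
    simp only [Polynomial.eval_finset_sum, Polynomial.eval_mul, Polynomial.eval_pow,
      Polynomial.eval_sub, Polynomial.eval_X, Polynomial.eval_C, sub_self]
    rw [Finset.sum_eq_single 0]
    · simp
    · intro j hj hj0
      rw [zero_pow hj0, mul_zero]
    · intro h
      exfalso
      rw [Finset.mem_range] at h
      omega
  -- the key evaluation identity, by downward induction
  have key : ∀ d : ℕ, ∀ i : ℕ, i + d = k + 2 → 3 ≤ i → ∀ s : ℝ, P i s = (q i).eval (x s) := by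
    intro d
    induction d with
    | zero =>
      intro i hi h3 s
      have hik : i = k + 2 := by omega
      subst hik
      have hconst : P (k + 2) s = P (k + 2) 0 :=
        is_const_of_deriv_eq_zero (fun t => (hlast t).differentiableAt)
          (fun t => (hlast t).deriv) s 0
      have hqc : (q (k + 2)).eval (x s) = P (k + 2) 0 := by
        rw [hq]
        have : k + 3 - (k + 2) = 1 := by omega
        simp [this]
      rw [hconst, hqc]
    | succ d ih =>
      intro i hi h3 s
      have hik : i ≤ k + 1 := by omega
      have ih' : ∀ s : ℝ, P (i + 1) s = (q (i + 1)).eval (x s) :=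
        ih (i + 1) (by omega) (by omega)
      set g : ℝ → ℝ := fun t => P i t - (q i).eval (x t) with hg
      have hgd : ∀ t : ℝ, HasDerivAt g 0 t := by
        intro t
        have h1 : HasDerivAt (fun u => (q i).eval (x u))
            ((Polynomial.derivative (q i)).eval (x t) * P₁ t) t :=
          ((q i).hasDerivAt (x t)).comp t (hx t)
        have h2 := (hmid i h3 hik t).sub h1
        have h3' : -(P₁ t * P (i + 1) t) - (Polynomial.derivative (q i)).eval (x t) * P₁ t
            = 0 := by
          rw [hder i (by omega), Polynomial.eval_neg, ih' t]
          ring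
        rwa [h3'] at h2
      have hconst : g s = g 0 :=
        is_const_of_deriv_eq_zero (fun t => (hgd t).differentiableAt)
          (fun t => (hgd t).deriv) s 0
      have hg0 : g 0 = 0 := by
        rw [hg]
        simp only
        rw [← hx0, heval0 i (by omega), sub_self]
      have : g s = 0 := hconst.trans hg0
      rw [hg] at this
      simp only at this
      linarith
  refine ⟨q, fun i h3 hi => ⟨hdeg i, key (k + 2 - i) i (by omega) h3⟩,
    fun i h3 hi => hder i (by omega), ?_, ?_⟩
  · have := hdeg 3
    omega
  · apply Polynomial.iterate_derivative_eq_zero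
    have := hdeg 3
    omega
end
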